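/- arXiv:1211.1899 — 2 statements merged into one kernel-verified Lean document; each statement's English description precedes it below -/
import Mathlib

section
/- The greedy matrix A(n) is periodic: there exist integers pp ≥ 0 and p ≥ 1 with pp + p ≤ 2^(σ²), where σ = 2n³ - n(n-3), such that a_{i+p, j+p} = a_{ij} for all i > pp and all j ≥ 1. -/
/-- Number of ones in row `k` strictly to the left of column `l` (columns `1..l-1`). -/
def rowOnes (a : ℕ → ℕ → Bool) (k l : ℕ) : ℕ :=
  ((Finset.Ico 1 l).filter (fun j => a k j = true)).card

/-- Number of ones in column `l` strictly above row `k` (rows `1..k-1`). -/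
def colOnes (a : ℕ → ℕ → Bool) (k l : ℕ) : ℕ :=
  ((Finset.Ico 1 k).filter (fun i => a i l = true)).card

/-- The greedy (first-choice) matrix `A(n)`: entries are placed row by row, left to
right; a one is placed at `(k,l)` unless the row already has `n+1` ones to the left,
the column already has `n+1` ones above, or a rectangle of ones would be created. -/
def IsGreedy (n : ℕ) (a : ℕ → ℕ → Bool) : Prop :=
  (∀ i j, i = 0 ∨ j = 0 → a i j = false) ∧
  ∀ k l, 1 ≤ k → 1 ≤ l →
    (a k l = true ↔
      rowOnes a k l < n + 1 ∧ colOnes a k l < n + 1 ∧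
      ¬ ∃ i j, 1 ≤ i ∧ i < k ∧ 1 ≤ j ∧ j < l ∧
        a i j = true ∧ a i l = true ∧ a k j = true)

/-!
A one at `(k, l)` means row `k` still had room at column `l`, so every earlier column of row `k`
is a one of that row (at most `n`), a full column (at most `k - 1` of them, by double counting the
ones above row `k`) or would close a rectangle (at most `n³`). Hence `l ≤ k + D` with
`D = n³ + n`, and by symmetry `A(n)` is a band matrix of half-width `D`. Below row `m` the greedy
rule then only reads the in-band entries of rows `≤ m` in columns `> m - D`, a triangle of
`D (2D + 1)` cells. If two rows `m < m'` see the same triangle, the matrix repeats with period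
`m' - m` from row `m` on, and pigeonhole finds such rows with `m' ≤ 2D + 2 ^ (D (2D + 1))`,
which is at most `2 ^ σ²`.
-/

open Finset

def ClosesRectangle (a : ℕ → ℕ → Bool) (k l : ℕ) : Prop :=
  ∃ i j, 1 ≤ i ∧ i < k ∧ 1 ≤ j ∧ j < l ∧ a i j = true ∧ a i l = true ∧ a k j = true

def IsBanded (a : ℕ → ℕ → Bool) (D : ℕ) : Prop :=
  ∀ i j, a i j = true → j ≤ i + D ∧ i ≤ j + D

variable {n D : ℕ} {a : ℕ → ℕ → Bool}

theorem IsBanded.eq_false (hb : IsBanded a D) {i j : ℕ} (hij : i + D < j ∨ j + D < i) :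
    a i j = false := by
  cases hval : a i j
  · rfl
  · have := hb i j hval
    omega

theorem rowOnes_mono (a : ℕ → ℕ → Bool) (k : ℕ) {l l' : ℕ} (hl : l ≤ l') :
    rowOnes a k l ≤ rowOnes a k l' :=
  card_le_card (filter_subset_filter _ (Ico_subset_Ico le_rfl hl))

theorem rowOnes_succ (a : ℕ → ℕ → Bool) (k : ℕ) {l : ℕ} (hl : 1 ≤ l) :
    rowOnes a k (l + 1) = rowOnes a k l + if a k l = true then 1 else 0 := by
  simp only [rowOnes, card_filter, sum_Ico_succ_top hl]

theorem card_filter_Ico_add {f g : ℕ → Bool} {p j : ℕ}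
    (hf : ∀ t, 1 ≤ t → t ≤ p → f t = false) (hfg : ∀ t, 1 ≤ t → t < j → f (t + p) = g t) :
    #{t ∈ Ico 1 (j + p) | f t = true} = #{t ∈ Ico 1 j | g t = true} := by
  rw [← card_image_of_injective {t ∈ Ico 1 j | g t = true} (add_left_injective p)]
  congr 1
  ext t
  simp only [mem_filter, mem_image, mem_Ico]
  constructor
  · rintro ⟨⟨ht, htj⟩, hft⟩
    have hpt : p < t := by
      by_contra! htp
      simp [hf t ht htp] at hft
    refine ⟨t - p, ⟨⟨by omega, by omega⟩, ?_⟩, by omega⟩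
    rwa [← hfg _ (by omega) (by omega), Nat.sub_add_cancel hpt.le]
  · rintro ⟨t, ⟨⟨ht, htj⟩, hgt⟩, rfl⟩
    exact ⟨⟨by omega, by omega⟩, (hfg t ht htj).trans hgt⟩

theorem exists_lt_le_add_card_eq {β : Type*} [Fintype β] (f : ℕ → β) (N : ℕ) :
    ∃ x y, N ≤ x ∧ x < y ∧ y ≤ N + Fintype.card β ∧ f x = f y := by
  obtain ⟨r, s, hrs, hfrs⟩ :=
    Fintype.exists_ne_map_eq_of_card_lt (fun r : Fin (Fintype.card β + 1) => f (N + r)) (by simp)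
  rcases lt_or_gt_of_ne (Fin.val_ne_of_ne hrs) with hlt | hlt
  · exact ⟨N + r, N + s, by omega, by omega, by omega, hfrs⟩
  · exact ⟨N + s, N + r, by omega, by omega, by omega, hfrs.symm⟩

namespace IsGreedy

theorem eq_true_iff (h : IsGreedy n a) {k l : ℕ} (hk : 1 ≤ k) (hl : 1 ≤ l) :
    a k l = true ↔
      rowOnes a k l < n + 1 ∧ colOnes a k l < n + 1 ∧ ¬ ClosesRectangle a k l :=
  h.2 k l hk hl

theorem one_le_of_eq_true (h : IsGreedy n a) {i j : ℕ} (hij : a i j = true) :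
    1 ≤ i ∧ 1 ≤ j := by
  by_contra hzero
  simp [h.1 i j (by omega)] at hij

theorem transpose (h : IsGreedy n a) : IsGreedy n (fun i j => a j i) := by
  refine ⟨fun i j hij => h.1 j i hij.symm, fun k l hk hl => ?_⟩
  have hrect : ClosesRectangle (fun i j => a j i) k l ↔ ClosesRectangle a l k := by
    constructor <;> rintro ⟨i, j, hi, hik, hj, hjl, hij, hil, hkj⟩ <;>
      exact ⟨j, i, hj, hjl, hi, hik, hij, hkj, hil⟩
  change a l k = true ↔ colOnes a l k < n + 1 ∧ rowOnes a l k < n + 1 ∧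
    ¬ ClosesRectangle (fun i j => a j i) k l
  rw [hrect, h.eq_true_iff hl hk]
  tauto

theorem rowOnes_le (h : IsGreedy n a) (k l : ℕ) : rowOnes a k l ≤ n + 1 := by
  induction l with
  | zero => simp [rowOnes]
  | succ l ih =>
    rcases Nat.eq_zero_or_pos l with rfl | hl
    · simp [rowOnes]
    rw [rowOnes_succ a k hl]
    cases hkl : a k l
    · simpa using ih
    · have := ((h.eq_true_iff (h.one_le_of_eq_true hkl).1 hl).mp hkl).1
      simp only [if_true]
      omega

/-- Double counting: the rows above `k` hold at most `(k - 1) (n + 1)` ones. -/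
theorem card_filter_colOnes_ge_le (h : IsGreedy n a) (k M : ℕ) :
    #{l ∈ Ico 1 M | n + 1 ≤ colOnes a k l} ≤ k - 1 := by
  refine Nat.le_of_mul_le_mul_right ?_ (Nat.succ_pos n)
  calc #{l ∈ Ico 1 M | n + 1 ≤ colOnes a k l} * (n + 1)
      ≤ ∑ l ∈ {l ∈ Ico 1 M | n + 1 ≤ colOnes a k l}, colOnes a k l := by
        simpa using card_nsmul_le_sum _ (colOnes a k) (n + 1) fun l hl => (mem_filter.mp hl).2
    _ ≤ ∑ l ∈ Ico 1 M, colOnes a k l := sum_le_sum_of_subset (filter_subset _ _)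
    _ = ∑ i ∈ Ico 1 k, rowOnes a i M := by
        simp only [colOnes, rowOnes, card_filter]
        exact sum_comm
    _ ≤ ∑ _i ∈ Ico 1 k, (n + 1) := sum_le_sum fun i _ => h.rowOnes_le i M
    _ = (k - 1) * (n + 1) := by simp

open Classical in
theorem card_filter_closesRectangle_le (h : IsGreedy n a) {k M : ℕ} (hrow : rowOnes a k M ≤ n) :
    #{l ∈ Ico 1 M | ClosesRectangle a k l} ≤ n * n * n := by
  let onesInRow : ℕ → Finset ℕ := fun i => {l ∈ Ico 1 M | a i l = true}
  let onesAbove : ℕ → Finset ℕ := fun j => {i ∈ Ico 1 k | a i j = true}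
  have hsub : {l ∈ Ico 1 M | ClosesRectangle a k l} ⊆
      (onesInRow k).biUnion fun j => (onesAbove j).biUnion fun i => (onesInRow i).erase j := by
    intro l hl
    obtain ⟨hlM, i, j, hi, hik, hj, hjl, hij, hil, hkj⟩ := mem_filter.mp hl
    simp only [onesInRow, onesAbove, mem_biUnion, mem_erase, mem_filter, mem_Ico] at hlM ⊢
    exact ⟨j, ⟨⟨hj, by omega⟩, hkj⟩, i, ⟨⟨hi, hik⟩, hij⟩, by omega, hlM, hil⟩
  refine (card_le_card hsub).trans <| (card_biUnion_le_card_mul _ _ (n * n) fun j hj => ?_).trans ?_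
  · obtain ⟨hjM, hkj⟩ := mem_filter.mp hj
    have hj := (mem_Ico.mp hjM).1
    have hcol := ((h.eq_true_iff (h.one_le_of_eq_true hkj).1 hj).mp hkj).2.1
    refine (card_biUnion_le_card_mul _ _ n fun i hi => ?_).trans
      (Nat.mul_le_mul_right n (show colOnes a k j ≤ n by omega))
    have hji : j ∈ onesInRow i := mem_filter.mpr ⟨hjM, (mem_filter.mp hi).2⟩
    have := h.rowOnes_le i M
    rw [card_erase_of_mem hji]
    change rowOnes a i M - 1 ≤ n
    omega
  · rw [mul_assoc]
    exact Nat.mul_le_mul_right _ hrow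

theorem le_add_of_eq_true (h : IsGreedy n a) {k l : ℕ} (hkl : a k l = true) :
    l ≤ k + (n ^ 3 + n) := by
  classical
  by_contra! hlt
  obtain ⟨hk, hl⟩ := h.one_le_of_eq_true hkl
  set M := k + (n ^ 3 + n) + 1 with hM
  have hrowl := ((h.eq_true_iff hk hl).mp hkl).1
  have hrowM : rowOnes a k M ≤ n := by
    have := rowOnes_mono a k (show M ≤ l by omega)
    omega
  have hcover : Ico 1 M ⊆ {t ∈ Ico 1 M | a k t = true} ∪
      {t ∈ Ico 1 M | n + 1 ≤ colOnes a k t} ∪ {t ∈ Ico 1 M | ClosesRectangle a k t} := by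
    intro t ht
    obtain ⟨ht1, htM⟩ := mem_Ico.mp ht
    simp only [mem_union, mem_filter, ht, true_and]
    by_contra! hnot
    obtain ⟨⟨hone, hcol⟩, hrect⟩ := hnot
    have := rowOnes_mono a k (show t ≤ l by omega)
    exact hone ((h.eq_true_iff hk ht1).mpr ⟨by omega, hcol, hrect⟩)
  have hcard := (card_le_card hcover).trans
    ((card_union_le _ _).trans (Nat.add_le_add_right (card_union_le _ _) _))
  have hfull := h.card_filter_colOnes_ge_le k M
  have hblocked := h.card_filter_closesRectangle_le hrowM
  have hcube : n ^ 3 = n * n * n := by ring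
  change _ ≤ rowOnes a k M + _ + _ at hcard
  simp only [Nat.card_Ico] at hcard
  omega

theorem isBanded (h : IsGreedy n a) : IsBanded a (n ^ 3 + n) := fun _ _ hij =>
  ⟨h.le_add_of_eq_true hij, h.transpose.le_add_of_eq_true hij⟩

theorem add_eq_of_forall_lt (h : IsGreedy n a) (hb : IsBanded a D) {k j p : ℕ}
    (hk : D < k) (hj : D < j) (hkj : k ≤ j + D)
    (hrow : ∀ t, 1 ≤ t → t < j → a (k + p) (t + p) = a k t)
    (hprev : ∀ i t, i < k → t ≤ j → k ≤ t + D → a (i + p) (t + p) = a i t) :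
    a (k + p) (j + p) = a k j := by
  have hcol : ∀ i, 1 ≤ i → i < k → a (i + p) (j + p) = a i j :=
    fun i _ hik => hprev i j hik le_rfl hkj
  have hrowOnes : rowOnes a (k + p) (j + p) = rowOnes a k j :=
    card_filter_Ico_add (fun _ _ _ => hb.eq_false (by omega)) hrow
  have hcolOnes : colOnes a (k + p) (j + p) = colOnes a k j :=
    card_filter_Ico_add (fun _ _ _ => hb.eq_false (by omega)) hcol
  have hrect : ClosesRectangle a (k + p) (j + p) ↔ ClosesRectangle a k j := by
    constructor
    · rintro ⟨i, t, hi, hik, ht, htj, hit, hij, hkt⟩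
      have hij' := (hb _ _ hij).1
      have hkt' := (hb _ _ hkt).2
      obtain ⟨i, rfl⟩ : ∃ i', i = i' + p := ⟨i - p, by omega⟩
      obtain ⟨t, rfl⟩ : ∃ t', t = t' + p := ⟨t - p, by omega⟩
      refine ⟨i, t, by omega, by omega, by omega, by omega, ?_, ?_, ?_⟩
      · rwa [hprev i t (by omega) (by omega) (by omega)] at hit
      · rwa [hcol i (by omega) (by omega)] at hij
      · rwa [hrow t (by omega) (by omega)] at hkt
    · rintro ⟨i, t, hi, hik, ht, htj, hit, hij, hkt⟩
      have hkt' := (hb _ _ hkt).2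
      refine ⟨i + p, t + p, by omega, by omega, by omega, by omega, ?_, ?_, ?_⟩
      · rwa [hprev i t hik htj.le hkt']
      · rwa [hcol i hi hik]
      · rwa [hrow t ht htj]
  rw [Bool.eq_iff_iff, h.eq_true_iff (by omega) (by omega), h.eq_true_iff (by omega) (by omega),
    hrowOnes, hcolOnes, hrect]

/-- Below row `m`, the greedy rule only consults entries in rows `≤ m` that lie within the band
and in columns `> m - D`; if the shift by `p` preserves those, it preserves everything below. -/
theorem add_eq_of_window (h : IsGreedy n a) (hb : IsBanded a D) {m p : ℕ} (hm : 2 * D ≤ m)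
    (hwin : ∀ i t, i ≤ m → m < t + D → t ≤ i + D → a (i + p) (t + p) = a i t) :
    ∀ k j, m < k → a (k + p) (j + p) = a k j := by
  intro k
  induction k using Nat.strong_induction_on with
  | _ k ihk =>
  intro j
  induction j using Nat.strong_induction_on with
  | _ j ihj =>
  intro hmk
  by_cases hband : k ≤ j + D ∧ j ≤ k + D
  swap
  · rw [hb.eq_false (by omega), hb.eq_false (by omega)]
  refine h.add_eq_of_forall_lt hb (by omega) (by omega) hband.1
    (fun t _ htj => ihj t htj hmk) fun i t hik _ hkt => ?_
  by_cases him : m < i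
  · exact ihk i hik t him
  by_cases hti : t ≤ i + D
  · exact hwin i t (by omega) (by omega) hti
  · rw [hb.eq_false (by omega), hb.eq_false (by omega)]

end IsGreedy

abbrev WindowCell (D : ℕ) : Type := {c : Fin (2 * D) × Fin (2 * D) // c.1 ≤ c.2}

theorem card_windowCell (D : ℕ) : Fintype.card (WindowCell D) = D * (2 * D + 1) := by
  rw [← Fintype.card_congr Sym2.sortEquiv, Sym2.card, Fintype.card_fin, Nat.choose_two_right,
    show (2 * D + 1) * (2 * D + 1 - 1) = 2 * (D * (2 * D + 1)) by
      rw [Nat.add_sub_cancel]; ring, Nat.mul_div_cancel_left _ two_pos]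

/-- Cell `(u, v)`, `u ≤ v < 2D`, is the entry of row `m - u` lying `v + 1 - D` columns right of
the diagonal; these are exactly the entries `IsGreedy.add_eq_of_window` asks to agree. -/
def window (a : ℕ → ℕ → Bool) (D m : ℕ) (c : WindowCell D) : Bool :=
  a (m - c.1.1) (m - c.1.1 + c.1.2 + 1 - D)

theorem add_eq_of_window_eq {x y : ℕ} (hxy : x ≤ y) (hwin : window a D x = window a D y)
    {i t : ℕ} (hix : i ≤ x) (hxt : x < t + D) (hti : t ≤ i + D) :
    a (i + (y - x)) (t + (y - x)) = a i t := by
  have hcell := congrFun hwin ⟨(⟨x - i, by omega⟩, ⟨t + D - i - 1, by omega⟩),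
    Fin.mk_le_mk.mpr (by omega)⟩
  simp only [window] at hcell
  convert hcell.symm using 2 <;> omega

theorem IsGreedy.exists_period (h : IsGreedy n a) (hb : IsBanded a D) :
    ∃ pp p : ℕ, 1 ≤ p ∧ pp + p ≤ 2 * D + 2 ^ (D * (2 * D + 1)) ∧
      ∀ i j, pp < i → a (i + p) (j + p) = a i j := by
  obtain ⟨x, y, hx, hxy, hy, hwin⟩ := exists_lt_le_add_card_eq (window a D) (2 * D)
  rw [Fintype.card_fun, Fintype.card_bool, card_windowCell] at hy
  refine ⟨x, y - x, by omega, by omega, h.add_eq_of_window hb hx fun _ _ => add_eq_of_window_eq hxy.le hwin⟩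

theorem two_mul_add_two_pow_le (n : ℕ) :
    2 * (n ^ 3 + n) + 2 ^ ((n ^ 3 + n) * (2 * (n ^ 3 + n) + 1)) ≤
      2 ^ (((2 * (n : ℤ) ^ 3 - (n : ℤ) * ((n : ℤ) - 3)) ^ 2).toNat) := by
  rcases Nat.eq_zero_or_pos n with rfl | hn
  · simp
  set E := (n ^ 3 + n) * (2 * (n ^ 3 + n) + 1)
  have hE : E + 1 ≤ ((2 * (n : ℤ) ^ 3 - (n : ℤ) * ((n : ℤ) - 3)) ^ 2).toNat := by
    rw [Int.le_toNat (sq_nonneg _)]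
    have hn1 : (1 : ℤ) ≤ n := by exact_mod_cast hn
    push_cast [E]
    nlinarith [mul_nonneg (pow_nonneg (sub_nonneg.mpr hn1) 2) (pow_nonneg (by linarith : (0 : ℤ) ≤ n) 4),
      mul_nonneg (by positivity : (0 : ℤ) ≤ (n : ℤ) ^ 2) (by nlinarith : (0 : ℤ) ≤ 7 * n ^ 2 - 7 * n + 7)]
  have hD : 2 * (n ^ 3 + n) ≤ 2 ^ E :=
    (show 2 * (n ^ 3 + n) ≤ E by rw [mul_comm 2]; exact Nat.mul_le_mul_left _ (by omega)).trans Nat.lt_two_pow_self.le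
  calc 2 * (n ^ 3 + n) + 2 ^ E ≤ 2 ^ (E + 1) := by have := Nat.pow_succ 2 E; omega
    _ ≤ _ := Nat.pow_le_pow_right two_pos hE

/-- Theorem 3.3: the greedy matrix `A(n)` is periodic, with preperiod `pp` and period
`p` satisfying `pp + p ≤ 2 ^ (σ^2)` where `σ = 2n^3 - n(n-3)`. -/
theorem stmt8 (n : ℕ) (a : ℕ → ℕ → Bool) (h : IsGreedy n a) :
    ∃ pp p : ℕ, 1 ≤ p ∧
      ((pp : ℤ) + (p : ℤ) ≤ 2 ^ (((2 * (n : ℤ) ^ 3 - (n : ℤ) * ((n : ℤ) - 3)) ^ 2).toNat)) ∧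
      ∀ i j : ℕ, pp < i → 1 ≤ j → a (i + p) (j + p) = a i j := by
  obtain ⟨pp, p, hp, hbound, hper⟩ := h.exists_period h.isBanded
  refine ⟨pp, p, hp, ?_, fun i j hi _ => hper i j hi⟩
  exact_mod_cast hbound.trans (two_mul_add_two_pow_le n)
end

section
/- In the greedy matrix A(1), the top-left 3×3 block is [[1,1,0],[1,0,1],[0,1,1]], and A(1) is periodic with preperiod 0 and period 3: a_{i+3,j+3}=a_{ij} for all i,j ≥ 1. -/
/-! Each entry of a greedy matrix is decided by entries with a smaller index sum, so the greedy
rule has at most one solution, and it suffices to check that the block-diagonal matrix with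
blocks `[[1,1,0],[1,0,1],[0,1,1]]` obeys it for `n = 1`. There, row `k` has its two ones inside
its own block, so the row count forbids every later column and the column count every earlier
one; within a block the only remaining zero, the centre, would close a rectangle with the
block's corner. -/

section Uniqueness

variable {a b : ℕ → ℕ → Bool}

lemma rowOnes_congr {k l : ℕ} (h : ∀ j < l, a k j = b k j) :
    rowOnes a k l = rowOnes b k l := by
  unfold rowOnes
  congr 1
  exact Finset.filter_congr fun j hj => by rw [h j (Finset.mem_Ico.1 hj).2]

lemma colOnes_congr {k l : ℕ} (h : ∀ i < k, a i l = b i l) :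
    colOnes a k l = colOnes b k l := by
  unfold colOnes
  congr 1
  exact Finset.filter_congr fun i hi => by rw [h i (Finset.mem_Ico.1 hi).2]

theorem IsGreedy.unique {n : ℕ} (ha : IsGreedy n a) (hb : IsGreedy n b) : a = b := by
  funext k l
  induction hN : k + l using Nat.strong_induction_on generalizing k l with
  | _ N ih =>
  have past : ∀ i j, i + j < k + l → a i j = b i j := fun i j h => ih _ (hN ▸ h) i j rfl
  rcases Nat.eq_zero_or_pos k with hk | hk
  · rw [ha.1 k l (Or.inl hk), hb.1 k l (Or.inl hk)]
  rcases Nat.eq_zero_or_pos l with hl | hl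
  · rw [ha.1 k l (Or.inr hl), hb.1 k l (Or.inr hl)]
  have rect : (∃ i j, 1 ≤ i ∧ i < k ∧ 1 ≤ j ∧ j < l ∧
        a i j = true ∧ a i l = true ∧ a k j = true) ↔
      ∃ i j, 1 ≤ i ∧ i < k ∧ 1 ≤ j ∧ j < l ∧
        b i j = true ∧ b i l = true ∧ b k j = true := by
    refine exists_congr fun i => exists_congr fun j => ?_
    constructor <;> rintro ⟨hi, hik, hj, hjl, hij, hil, hkj⟩
    · rw [← past i j (by omega), ← past i l (by omega), ← past k j (by omega)]
      exact ⟨hi, hik, hj, hjl, hij, hil, hkj⟩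
    · rw [past i j (by omega), past i l (by omega), past k j (by omega)]
      exact ⟨hi, hik, hj, hjl, hij, hil, hkj⟩
  rw [Bool.eq_iff_iff, ha.2 k l hk hl, hb.2 k l hk hl, rect,
    rowOnes_congr fun j _ => past k j (by omega), colOnes_congr fun i _ => past i l (by omega)]

end Uniqueness

/-- Block diagonal with `3 × 3` blocks whose zeros are their anti-diagonals. -/
def blockMatrix (i j : ℕ) : Bool :=
  decide (1 ≤ i ∧ 1 ≤ j ∧ (i - 1) / 3 = (j - 1) / 3 ∧ (i - 1) % 3 + (j - 1) % 3 ≠ 2)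

lemma blockMatrix_eq_true_iff {i j : ℕ} : blockMatrix i j = true ↔
    1 ≤ i ∧ 1 ≤ j ∧ (i - 1) / 3 = (j - 1) / 3 ∧ (i - 1) % 3 + (j - 1) % 3 ≠ 2 :=
  decide_eq_true_iff

lemma blockMatrix_comm (i j : ℕ) : blockMatrix i j = blockMatrix j i := by
  rw [Bool.eq_iff_iff, blockMatrix_eq_true_iff, blockMatrix_eq_true_iff]
  omega

/- The columns of the two ones in row `k ≥ 1`: for `(k - 1) % 3 = 0, 1, 2` they are the columns
`{0, 1}`, `{0, 2}`, `{1, 2}` of the block. -/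
def firstOne (k : ℕ) : ℕ := 3 * ((k - 1) / 3) + 1 + (k - 1) % 3 / 2

def secondOne (k : ℕ) : ℕ := 3 * ((k - 1) / 3) + 2 + ((k - 1) % 3 + 2) / 3

lemma blockMatrix_eq_true_iff_of_pos {k j : ℕ} (hk : 1 ≤ k) :
    blockMatrix k j = true ↔ j = firstOne k ∨ j = secondOne k := by
  rw [blockMatrix_eq_true_iff, firstOne, secondOne]
  obtain h | h | h : (k - 1) % 3 = 0 ∨ (k - 1) % 3 = 1 ∨ (k - 1) % 3 = 2 := by omega
  all_goals simp only [h]; omega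

lemma rowOnes_blockMatrix_lt_two_iff {k l : ℕ} (hk : 1 ≤ k) :
    rowOnes blockMatrix k l < 2 ↔ l ≤ secondOne k := by
  have hrow : ∀ j, blockMatrix k j = true ↔ j = firstOne k ∨ j = secondOne k :=
    fun j => blockMatrix_eq_true_iff_of_pos hk
  have hfirst : 1 ≤ firstOne k ∧ firstOne k < secondOne k := by
    rw [firstOne, secondOne]; omega
  unfold rowOnes
  constructor
  · intro hlt
    by_contra! hl
    have : {firstOne k, secondOne k} ⊆ (Finset.Ico 1 l).filter (blockMatrix k · = true) := by
      intro j hj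
      simp only [Finset.mem_insert, Finset.mem_singleton] at hj
      simp only [Finset.mem_filter, Finset.mem_Ico, hrow]
      omega
    have := Finset.card_le_card this
    rw [Finset.card_pair hfirst.2.ne] at this
    omega
  · intro hl
    have : (Finset.Ico 1 l).filter (blockMatrix k · = true) ⊆ {firstOne k} := by
      intro j hj
      simp only [Finset.mem_filter, Finset.mem_Ico, hrow] at hj
      rw [Finset.mem_singleton]
      omega
    have := Finset.card_le_card this
    rw [Finset.card_singleton] at this
    omega

lemma colOnes_blockMatrix (k l : ℕ) : colOnes blockMatrix k l = rowOnes blockMatrix l k := by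
  unfold colOnes rowOnes
  simp only [blockMatrix_comm _ l]

theorem isGreedy_blockMatrix : IsGreedy 1 blockMatrix := by
  refine ⟨fun i j hij => ?_, fun k l hk hl => ?_⟩
  · rw [Bool.eq_false_iff, ne_eq, blockMatrix_eq_true_iff]
    omega
  rw [colOnes_blockMatrix, rowOnes_blockMatrix_lt_two_iff hk, rowOnes_blockMatrix_lt_two_iff hl]
  simp only [blockMatrix_eq_true_iff, secondOne]
  constructor
  · intro hkl
    refine ⟨by omega, by omega, ?_⟩
    rintro ⟨i, j, -, hik, -, hjl, hij, hil, hkj⟩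
    omega
  · rintro ⟨hrow, hcol, hrect⟩
    by_contra hkl
    exact hrect ⟨3 * ((k - 1) / 3) + 1, 3 * ((k - 1) / 3) + 1, by omega, by omega, by omega,
      by omega, by omega, by omega, by omega⟩

/-- The greedy matrix `A(1)` has top-left `3×3` block `[[1,1,0],[1,0,1],[0,1,1]]`
and is periodic with preperiod `0` and period `3`. -/
theorem stmt16 (a : ℕ → ℕ → Bool) (h : IsGreedy 1 a) :
    (a 1 1 = true ∧ a 1 2 = true ∧ a 1 3 = false ∧
     a 2 1 = true ∧ a 2 2 = false ∧ a 2 3 = true ∧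
     a 3 1 = false ∧ a 3 2 = true ∧ a 3 3 = true) ∧
    ∀ i j, 1 ≤ i → 1 ≤ j → a (i + 3) (j + 3) = a i j := by
  obtain rfl := h.unique isGreedy_blockMatrix
  refine ⟨by decide, fun i j _ _ => ?_⟩
  rw [Bool.eq_iff_iff, blockMatrix_eq_true_iff, blockMatrix_eq_true_iff]
  omega
end
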